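/- arXiv:2508.11229 — 7 statements merged into one kernel-verified Lean document; each statement's English description precedes it below -/
import Mathlib

section
/- Let q be a power of 3. The number of r in F_q^× such that r is a nonzero square in F_q and Tr_{F_q/F_3}(1/√r) = 0 is (q-3)/6. (Here √r denotes either square root; the condition is independent of the choice since Tr(-x) = -Tr(x) and Tr(x)=0 iff Tr(-x)=0.) -/
/-- Let `q` be a power of 3 and `F_q` a finite field with `q` elements (characteristic 3).
The number of `r ∈ F_q^×` that are nonzero squares with `Tr_{F_q/F_3}(1/√r) = 0`
equals `(q-3)/6`. -/
theorem stmt0 (F : Type*) [Field F] [Fintype F] [CharP F 3] [Algebra (ZMod 3) F] :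
    Nat.card {r : F // r ≠ 0 ∧ ∃ s : F, s ^ 2 = r ∧ Algebra.trace (ZMod 3) F s⁻¹ = 0}
      = (Fintype.card F - 3) / 6 := by
  classical
  haveI : FiniteDimensional (ZMod 3) F := Module.Finite.of_finite
  haveI : Algebra.IsSeparable (ZMod 3) F := inferInstance
  set T := Algebra.trace (ZMod 3) F with hTdef
  have hsurj : Function.Surjective T := Algebra.trace_surjective (ZMod 3) F
  -- cardinality of the kernel
  set K := Nat.card (LinearMap.ker T) with hKdef
  have hker : Fintype.card F = 3 * K := by
    have h1 := AddSubgroup.card_eq_card_quotient_mul_card_addSubgroup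
      (LinearMap.ker T).toAddSubgroup
    have e : (F ⧸ LinearMap.ker T) ≃ₗ[ZMod 3] ZMod 3 :=
      T.quotKerEquivOfSurjective hsurj
    have h2 : Nat.card (F ⧸ (LinearMap.ker T).toAddSubgroup) = 3 :=
      (Nat.card_congr e.toEquiv).trans (Nat.card_zmod 3)
    rw [Nat.card_eq_fintype_card] at h1
    rw [h1, h2]
    rfl
  -- nonzero of (2 : F)
  have h2ne : (2 : F) ≠ 0 := by
    have h3 : (3 : F) = 0 := by exact_mod_cast CharP.cast_eq_zero F 3
    intro h
    have : (1 : F) = 0 := by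
      have h31 : (3 : F) - (2 : F) = 1 := by ring
      rw [← h31, h3, h]; ring
    exact one_ne_zero this
  have hnegself : ∀ s : F, s ≠ 0 → s ≠ -s := by
    intro s hs h
    apply hs
    have h2s : (2 : F) * s = 0 := by
      calc (2 : F) * s = s + s := two_mul s
        _ = -s + s := by rw [← h]
        _ = 0 := neg_add_cancel s
    rcases mul_eq_zero.mp h2s with h' | h'
    · exact absurd h' h2ne
    · exact h'
  -- Finsets
  set A : Finset F := Finset.univ.filter (fun s : F => s ≠ 0 ∧ T s⁻¹ = 0) with hA
  set C : Finset F := Finset.univ.filter (fun t : F => t ≠ 0 ∧ T t = 0) with hC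
  set B : Finset F := A.image (· ^ 2) with hB
  -- A.card = C.card via inversion
  have hAC : A.card = C.card := by
    refine Finset.card_bij' (fun s _ => s⁻¹) (fun t _ => t⁻¹) ?_ ?_ ?_ ?_
    · intro s hs
      simp only [hA, Finset.mem_filter, Finset.mem_univ, true_and] at hs
      simp only [hC, Finset.mem_filter, Finset.mem_univ, true_and]
      exact ⟨inv_ne_zero hs.1, hs.2⟩
    · intro t ht
      simp only [hC, Finset.mem_filter, Finset.mem_univ, true_and] at ht
      simp only [hA, Finset.mem_filter, Finset.mem_univ, true_and]
      refine ⟨inv_ne_zero ht.1, ?_⟩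
      rw [inv_inv]; exact ht.2
    · intro s _; exact inv_inv s
    · intro t _; exact inv_inv t
  -- C.card = K - 1
  have hCcard : C.card = K - 1 := by
    have hKer : K = (Finset.univ.filter (fun t : F => T t = 0)).card := by
      rw [hKdef, Nat.card_congr (Equiv.subtypeEquivRight fun x => LinearMap.mem_ker),
        Nat.card_eq_fintype_card, Fintype.card_subtype]
    have hCe : C = (Finset.univ.filter (fun t : F => T t = 0)).erase 0 := by
      ext t
      simp only [hC, Finset.mem_filter, Finset.mem_univ, true_and, Finset.mem_erase]
    rw [hCe, Finset.card_erase_of_mem, ← hKer]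
    simp only [Finset.mem_filter, Finset.mem_univ, true_and, map_zero]
  -- A.card = 2 * B.card
  have hAB : A.card = 2 * B.card := by
    rw [Finset.card_eq_sum_card_image (· ^ 2) A]
    rw [← hB, Finset.sum_congr rfl (fun b hb => ?_), Finset.sum_const, smul_eq_mul, mul_comm]
    obtain ⟨s, hsA, hsb⟩ := Finset.mem_image.mp hb
    have hs : s ≠ 0 ∧ T s⁻¹ = 0 := by
      simpa [hA] using hsA
    have hfib : A.filter (fun x => x ^ 2 = b) = {s, -s} := by
      ext x
      simp only [Finset.mem_filter, Finset.mem_insert, Finset.mem_singleton]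
      constructor
      · rintro ⟨hxA, hx2⟩
        have hfac : (x - s) * (x + s) = 0 := by linear_combination hx2 - hsb
        rcases mul_eq_zero.mp hfac with h | h
        · left; exact sub_eq_zero.mp h
        · right; exact eq_neg_of_add_eq_zero_left h
      · rintro (rfl | rfl)
        · exact ⟨hsA, hsb⟩
        · refine ⟨?_, by rw [← hsb]; ring⟩
          simp only [hA, Finset.mem_filter, Finset.mem_univ, true_and]
          refine ⟨neg_ne_zero.mpr hs.1, ?_⟩
          rw [inv_neg, map_neg, hs.2, neg_zero]
    rw [hfib, Finset.card_insert_of_notMem, Finset.card_singleton]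
    simp only [Finset.mem_singleton]
    exact hnegself s hs.1
  -- Nat.card of the subtype is B.card
  have hsub : Nat.card {r : F // r ≠ 0 ∧ ∃ s : F, s ^ 2 = r ∧ T s⁻¹ = 0} = B.card := by
    rw [Nat.card_eq_fintype_card, Fintype.card_subtype]
    congr 1
    ext r
    simp only [Finset.mem_filter, Finset.mem_univ, true_and, hB, Finset.mem_image]
    constructor
    · rintro ⟨hr, s, hs2, hTs⟩
      refine ⟨s, ?_, hs2⟩
      simp only [hA, Finset.mem_filter, Finset.mem_univ, true_and]
      exact ⟨fun h => hr (by rw [← hs2, h]; ring), hTs⟩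
    · rintro ⟨s, hsA, rfl⟩
      have hs : s ≠ 0 ∧ T s⁻¹ = 0 := by simpa [hA] using hsA
      exact ⟨pow_ne_zero 2 hs.1, s, rfl, hs.2⟩
  rw [hsub]
  omega
end

section
/- Let q be a power of 3, r ∈ F_q^× a square, and choose s ∈ F_q with s^2 = r. Then the cubic polynomial S^3 - rS + r ∈ F_q[S] has three roots in F_q (counted without multiplicity, all distinct) if Tr_{F_q/F_3}(1/s) = 0, and has no roots in F_q if Tr_{F_q/F_3}(1/s) ≠ 0. -/
section AS
variable (F : Type*) [Field F] [Fintype F] [CharP F 3] [Algebra (ZMod 3) F]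

lemma AS_fact : Fact (Nat.Prime 3) := ⟨by norm_num⟩

noncomputable def ASphi : F →ₗ[ZMod 3] F where
  toFun y := y ^ 3 - y
  map_add' a b := by
    have : Fact (Nat.Prime 3) := ⟨by norm_num⟩
    have h := add_pow_char (x := a) (y := b) (p := 3)
    simp only [h]; ring
  map_smul' c y := by
    simp only [RingHom.id_apply, Algebra.smul_def, mul_pow, ← map_pow, ZMod.pow_card]
    ring

lemma AS_ker : LinearMap.ker (ASphi F) = LinearMap.range (Algebra.linearMap (ZMod 3) F) := by
  ext y
  simp only [LinearMap.mem_ker, LinearMap.mem_range, Algebra.linearMap_apply, ASphi,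
    LinearMap.coe_mk, AddHom.coe_mk]
  constructor
  · intro h
    have h' : y * (y - 1) * (y + 1) = 0 := by ring_nf; linear_combination h
    rcases mul_eq_zero.mp h' with h'' | h''
    · rcases mul_eq_zero.mp h'' with h3 | h3
      · exact ⟨0, by simp [h3.symm]⟩
      · exact ⟨1, by rw [map_one]; linear_combination -h3⟩
    · exact ⟨-1, by rw [map_neg, map_one]; linear_combination -h''⟩
  · rintro ⟨c, rfl⟩
    rw [← map_pow, ZMod.pow_card, sub_self]

lemma AS_trace_frob (y : F) : Algebra.trace (ZMod 3) F (y ^ 3) = Algebra.trace (ZMod 3) F y := by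
  have : Fact (Nat.Prime 3) := ⟨by norm_num⟩
  have hp : ExpChar F 3 := ExpChar.prime (Fact.out)
  let e : F ≃ₐ[ZMod 3] F := AlgEquiv.ofRingEquiv (f := frobeniusEquiv F 3)
    (fun c => by
      simp only [frobeniusEquiv_apply, frobenius_def, ← map_pow, ZMod.pow_card])
  have := Algebra.trace_eq_of_algEquiv e y
  simpa [e, AlgEquiv.ofRingEquiv, frobenius_def] using this

lemma AS_trace_eq_zero_iff (c : F) :
    Algebra.trace (ZMod 3) F c = 0 ↔ ∃ y : F, y ^ 3 - y = c := by
  have : Fact (Nat.Prime 3) := ⟨by norm_num⟩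
  have hsep : Algebra.IsSeparable (ZMod 3) F := inferInstance
  set T : F →ₗ[ZMod 3] ZMod 3 := Algebra.trace (ZMod 3) F with hT
  have hle : LinearMap.range (ASphi F) ≤ LinearMap.ker T := by
    rintro _ ⟨y, rfl⟩
    simp only [ASphi, LinearMap.coe_mk, AddHom.coe_mk, LinearMap.mem_ker, hT, map_sub,
      AS_trace_frob, sub_self]
  have hkerphi : Module.finrank (ZMod 3) (LinearMap.ker (ASphi F)) = 1 := by
    rw [AS_ker, LinearMap.finrank_range_of_inj (by
      intro a b hab
      exact (algebraMap (ZMod 3) F).injective hab)]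
    simp [Module.finrank_self]
  have h1 := LinearMap.finrank_range_add_finrank_ker (ASphi F)
  have h2 := LinearMap.finrank_range_add_finrank_ker T
  have hTsurj : LinearMap.range T = ⊤ := LinearMap.range_eq_top.mpr
    (Algebra.trace_surjective (ZMod 3) F)
  have hrT : Module.finrank (ZMod 3) (LinearMap.range T) = 1 := by
    rw [hTsurj]; simp [Module.finrank_self]
  have heq : LinearMap.range (ASphi F) = LinearMap.ker T := by
    apply Submodule.eq_of_le_of_finrank_le hle
    omega
  constructor
  · intro h
    have : c ∈ LinearMap.range (ASphi F) := heq ▸ (LinearMap.mem_ker.mpr h)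
    obtain ⟨y, hy⟩ := this
    exact ⟨y, hy⟩
  · rintro ⟨y, rfl⟩
    have : (y ^ 3 - y) ∈ LinearMap.range (ASphi F) := ⟨y, rfl⟩
    exact LinearMap.mem_ker.mp (hle this)

end AS

/-- Let `F_q` be a finite field of characteristic 3, `r = s^2` a nonzero square.
Then `S^3 - rS + r` has three distinct roots in `F_q` if `Tr_{F_q/F_3}(1/s) = 0`,
and no roots in `F_q` if `Tr_{F_q/F_3}(1/s) ≠ 0`. -/
theorem stmt3 (F : Type*) [Field F] [Fintype F] [CharP F 3] [Algebra (ZMod 3) F]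
    (r s : F) (hs : s ≠ 0) (hrs : r = s ^ 2) :
    (Algebra.trace (ZMod 3) F s⁻¹ = 0 →
      ∃ a b c : F, a ≠ b ∧ a ≠ c ∧ b ≠ c ∧
        a ^ 3 - r * a + r = 0 ∧ b ^ 3 - r * b + r = 0 ∧ c ^ 3 - r * c + r = 0) ∧
    (Algebra.trace (ZMod 3) F s⁻¹ ≠ 0 → ∀ x : F, x ^ 3 - r * x + r ≠ 0) := by
  have h3 : (3 : F) = 0 := by
    have := CharP.cast_eq_zero F 3; exact_mod_cast this
  have key : ∀ x : F, x ^ 3 - r * x + r = s ^ 3 * ((x / s) ^ 3 - (x / s) + s⁻¹) := by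
    intro x
    field_simp
    ring_nf
    rw [hrs]
  constructor
  · intro htr
    have htr' : Algebra.trace (ZMod 3) F (-s⁻¹) = 0 := by rw [map_neg, htr, neg_zero]
    obtain ⟨y, hy⟩ := (AS_trace_eq_zero_iff F (-s⁻¹)).mp htr'
    -- roots: s*y, s*(y+1), s*(y-1)
    have hroot : ∀ k : F, k ^ 3 = k → (s * (y + k)) ^ 3 - r * (s * (y + k)) + r = 0 := by
      intro k hk
      rw [key]
      have hd : s * (y + k) / s = y + k := by field_simp
      rw [hd]
      have hcube : (y + k) ^ 3 = y ^ 3 + k := by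
        have : Fact (Nat.Prime 3) := ⟨by norm_num⟩
        rw [add_pow_char (p := 3), hk]
      rw [hcube]
      have : y ^ 3 + k - (y + k) + s⁻¹ = (y ^ 3 - y) + s⁻¹ := by ring
      rw [this, hy]
      ring
    refine ⟨s * (y + 0), s * (y + 1), s * (y + (-1)), ?_, ?_, ?_, hroot 0 (by ring),
      hroot 1 (by ring), hroot (-1) (by ring)⟩
    · intro h
      have := mul_left_cancel₀ hs h
      have h1 : (1 : F) = 0 := by linear_combination -this
      exact one_ne_zero h1
    · intro h
      have := mul_left_cancel₀ hs h
      have h1 : (1 : F) = 0 := by linear_combination this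
      exact one_ne_zero h1
    · intro h
      have := mul_left_cancel₀ hs h
      have h1 : (2 : F) = 0 := by linear_combination this
      have : (2 : F) ≠ 0 := by
        intro h2
        have : (1 : F) = 0 := by linear_combination h3 - h2
        exact one_ne_zero this
      exact this h1
  · intro htr x hx
    rw [key] at hx
    have h0 := mul_eq_zero.mp hx
    rcases h0 with h0 | h0
    · exact hs (pow_eq_zero_iff (by norm_num) |>.mp h0)
    · have : (x / s) ^ 3 - (x / s) = -s⁻¹ := by linear_combination h0
      have := (AS_trace_eq_zero_iff F (-s⁻¹)).mpr ⟨x / s, this⟩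
      rw [map_neg, neg_eq_zero] at this
      exact htr this
end

section
/- Let q be a power of 3 and let λ ∈ F_{q^3} satisfy λ^{q+1} - λ^q + 1 = 0. Then the j-invariant j(λ) = (λ+1)^6 / (λ^2 (λ-1)^2) lies in F_q. (Note λ ∉ {0,1}: λ = 0 gives 1 = 0 and λ = 1 gives 1 = 0.) -/
open Polynomial in
lemma mem_range_of_pow_card_eq (F K : Type*) [Field F] [Fintype F] [Field K]
    [Algebra F K] [FiniteDimensional F K] {x : K}
    (hx : x ^ Fintype.card F = x) : x ∈ Set.range (algebraMap F K) := by
  classical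
  have : Finite K := Module.finite_of_finite F
  have : Fintype K := Fintype.ofFinite K
  set q := Fintype.card F with hq
  have hq1 : 1 < q := Fintype.one_lt_card
  by_contra hmem
  set P : K[X] := X ^ q - X with hP
  have hPne : P ≠ 0 := FiniteField.X_pow_card_sub_X_ne_zero K hq1
  have hPdeg : P.natDegree = q := FiniteField.X_pow_card_sub_X_natDegree_eq K hq1
  set Z : Finset K := insert x (Finset.univ.image (algebraMap F K)) with hZ
  have hroot : ∀ y ∈ Z, y ∈ P.roots := by
    intro y hy
    rw [mem_roots hPne]
    simp only [hZ, Finset.mem_insert, Finset.mem_image, Finset.mem_univ, true_and] at hy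
    rcases hy with rfl | ⟨z, rfl⟩
    · simp [IsRoot, hP, hx]
    · simp [IsRoot, hP, ← map_pow, hq, FiniteField.pow_card]
  have hsub : Z.val ⊆ P.roots := by
    intro y hy
    exact hroot y hy
  have hcard := Polynomial.card_le_degree_of_subset_roots hsub
  have hxnot : x ∉ Finset.univ.image (algebraMap F K) := by
    intro h
    obtain ⟨z, _, hz⟩ := Finset.mem_image.mp h
    exact hmem ⟨z, hz⟩
  have hZcard : Z.card = q + 1 := by
    rw [hZ, Finset.card_insert_of_notMem hxnot,
      Finset.card_image_of_injective _ (algebraMap F K).injective, Finset.card_univ]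
  omega

/-- Let `q` be a power of 3, `F = F_q` and `K = F_{q^3}`.  If `λ ∈ K` satisfies
`λ^{q+1} - λ^q + 1 = 0`, then `j(λ) = (λ+1)^6/(λ^2(λ-1)^2)` lies in `F_q`. -/
theorem stmt6 (F K : Type*) [Field F] [Fintype F] [CharP F 3] [Field K]
    [Algebra F K] (hdim : Module.finrank F K = 3) (l : K)
    (hl : l ^ (Fintype.card F + 1) - l ^ Fintype.card F + 1 = 0) :
    (l + 1) ^ 6 / (l ^ 2 * (l - 1) ^ 2) ∈ Set.range (algebraMap F K) := by
  have hfd : FiniteDimensional F K := FiniteDimensional.of_finrank_pos (by omega)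
  have hK3 : CharP K 3 := charP_of_injective_algebraMap (algebraMap F K).injective 3
  obtain ⟨n, hp3, hcard⟩ := FiniteField.card F 3
  set q := Fintype.card F with hq
  have hq1 : 1 < q := Fintype.one_lt_card
  -- l ≠ 0 and l ≠ 1
  have hl0 : l ≠ 0 := by
    rintro rfl
    rw [zero_pow (by omega), zero_pow (by omega)] at hl
    simp at hl
  have hl1 : l ≠ 1 := by
    rintro rfl
    simp at hl
  have hlsub : l - 1 ≠ 0 := sub_ne_zero.mpr hl1
  have hrel : l ^ q * l - l ^ q + 1 = 0 := by linear_combination hl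
  have h3 : (3 : K) = 0 := CharP.cast_eq_zero K 3
  have haval' : l ^ q * (l - 1) = -1 := by linear_combination hrel
  have haval : l ^ q = -1 / (l - 1) := by
    rw [eq_div_iff hlsub]; linear_combination hrel
  have hb1 : l ^ q + 1 = (l + 1) / (l - 1) := by
    rw [eq_div_iff hlsub]; linear_combination haval' - h3
  have hb2 : l ^ q - 1 = -l / (l - 1) := by
    rw [eq_div_iff hlsub]; linear_combination haval'
  apply mem_range_of_pow_card_eq
  have h1 : (l + 1) ^ q = l ^ q + 1 := by
    rw [hcard, add_pow_char_pow, one_pow]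
  have h2 : (l - 1) ^ q = l ^ q - 1 := by
    rw [hcard, sub_pow_char_pow, one_pow]
  rw [div_pow, mul_pow, ← pow_mul, ← pow_mul, ← pow_mul, mul_comm 6 q,
    mul_comm 2 q, pow_mul, pow_mul, pow_mul, h1, h2, hb1, hb2, haval]
  field_simp
end

section
/- Let q be a power of 3 and let λ ∈ F_{q^2} \ {1} satisfy N_{F_{q^2}/F_q}(λ) = λ^{q+1} = 1. Then j(λ) = (λ+1)^6/(λ^2(λ-1)^2) = (λ^q + λ - 1)^3/(λ^q + λ + 1), and in particular j(λ) ∈ F_q. Moreover if λ ≠ -1 then j(λ) ≠ 0. -/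
/-!
If `λ^(q+1) = 1` then `λ^q = λ⁻¹`, so the trace `s = λ^q + λ` is fixed by the `q`-power
Frobenius and hence lies in `F_q`. In characteristic 3 one has `λ⁻¹ + λ - 1 = (λ+1)²/λ` and
`λ⁻¹ + λ + 1 = (λ-1)²/λ`, which turns `j(λ)` into `(s-1)³/(s+1)`.
-/

open Polynomial

theorem FiniteField.mem_range_algebraMap_of_pow_card_eq_self {F K : Type*} [Field F] [Fintype F]
    [CommRing K] [IsDomain K] [Algebra F K] {x : K} (hx : x ^ Fintype.card F = x) :
    x ∈ Set.range (algebraMap F K) := by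
  have hq : 1 < Fintype.card F := Fintype.one_lt_card
  have hsplits : (X ^ Fintype.card F - X : F[X]).Splits := by
    rw [splits_iff_card_roots, roots_X_pow_card_sub_X, X_pow_card_sub_X_natDegree_eq F hq]
    rfl
  exact hsplits.mem_range_of_isRoot (X_pow_card_sub_X_ne_zero F hq) (by simp [hx])

theorem pow_card_add_self_mem_range_of_pow_card_eq_inv {F K : Type*} [Field F] [Fintype F]
    [Field K] [Algebra F K] {l : K} (hinv : l ^ Fintype.card F = l⁻¹) :
    l ^ Fintype.card F + l ∈ Set.range (algebraMap F K) := by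
  apply FiniteField.mem_range_algebraMap_of_pow_card_eq_self
  rw [← FiniteField.frobeniusAlgHom_apply F K, map_add, FiniteField.frobeniusAlgHom_apply,
    FiniteField.frobeniusAlgHom_apply, hinv, inv_pow, hinv, inv_inv, add_comm]

section CharThree

variable {K : Type*} [Field K] [CharP K 3] {l : K}

theorem inv_add_self_sub_one_of_charThree (hl : l ≠ 0) : l⁻¹ + l - 1 = (l + 1) ^ 2 / l := by
  have h3 : (3 : K) = 0 := CharP.cast_eq_zero K 3
  field_simp
  linear_combination -l * h3

theorem inv_add_self_add_one_of_charThree (hl : l ≠ 0) : l⁻¹ + l + 1 = (l - 1) ^ 2 / l := by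
  have h3 : (3 : K) = 0 := CharP.cast_eq_zero K 3
  field_simp
  linear_combination l * h3

theorem sixth_pow_div_eq_inv_add_self_of_charThree (hl : l ≠ 0) :
    (l + 1) ^ 6 / (l ^ 2 * (l - 1) ^ 2) = (l⁻¹ + l - 1) ^ 3 / (l⁻¹ + l + 1) := by
  rw [inv_add_self_sub_one_of_charThree hl, inv_add_self_add_one_of_charThree hl, div_pow,
    div_div_div_eq, ← mul_div_mul_right _ _ hl]
  congr 1 <;> ring

end CharThree

theorem stmt7_general (F K : Type*) [Field F] [Fintype F] [CharP F 3] [Field K]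
    [Algebra F K] (l : K) (hl1 : l ≠ 1)
    (hl : l ^ (Fintype.card F + 1) = 1) :
    (l + 1) ^ 6 / (l ^ 2 * (l - 1) ^ 2)
        = (l ^ Fintype.card F + l - 1) ^ 3 / (l ^ Fintype.card F + l + 1) ∧
      (l + 1) ^ 6 / (l ^ 2 * (l - 1) ^ 2) ∈ Set.range (algebraMap F K) ∧
      (l ≠ -1 → (l + 1) ^ 6 / (l ^ 2 * (l - 1) ^ 2) ≠ 0) := by
  have : CharP K 3 := charP_of_injective_algebraMap (algebraMap F K).injective 3
  have hl0 : l ≠ 0 := by rintro rfl; simp at hl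
  have hinv : l ^ Fintype.card F = l⁻¹ := eq_inv_of_mul_eq_one_left (pow_succ l _ ▸ hl)
  have hj : (l + 1) ^ 6 / (l ^ 2 * (l - 1) ^ 2)
      = (l ^ Fintype.card F + l - 1) ^ 3 / (l ^ Fintype.card F + l + 1) := by
    rw [hinv, sixth_pow_div_eq_inv_add_self_of_charThree hl0]
  refine ⟨hj, ?_, fun hlm1 => ?_⟩
  · obtain ⟨s, hs⟩ := pow_card_add_self_mem_range_of_pow_card_eq_inv hinv
    exact ⟨(s - 1) ^ 3 / (s + 1), by simp [hj, hs]⟩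
  · have hnum : l + 1 ≠ 0 := fun h => hlm1 (eq_neg_of_add_eq_zero_left h)
    have hsub : l - 1 ≠ 0 := sub_ne_zero.mpr hl1
    positivity

/-- Let `q` be a power of 3, `F = F_q` and `K = F_{q^2}`.  If `λ ∈ K \ {1}` has
norm `λ^{q+1} = 1`, then `j(λ) = (λ+1)^6/(λ^2(λ-1)^2) = (λ^q+λ-1)^3/(λ^q+λ+1)`,
in particular `j(λ) ∈ F_q`; moreover `j(λ) ≠ 0` when `λ ≠ -1`. -/
theorem stmt7 (F K : Type*) [Field F] [Fintype F] [CharP F 3] [Field K]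
    [Algebra F K] (hdim : Module.finrank F K = 2) (l : K) (hl1 : l ≠ 1)
    (hl : l ^ (Fintype.card F + 1) = 1) :
    (l + 1) ^ 6 / (l ^ 2 * (l - 1) ^ 2)
        = (l ^ Fintype.card F + l - 1) ^ 3 / (l ^ Fintype.card F + l + 1) ∧
      (l + 1) ^ 6 / (l ^ 2 * (l - 1) ^ 2) ∈ Set.range (algebraMap F K) ∧
      (l ≠ -1 → (l + 1) ^ 6 / (l ^ 2 * (l - 1) ^ 2) ≠ 0) :=
  stmt7_general F K l hl1 hl
end

section
/- Let q be a power of 3 and r ∈ F_q^×. The projective plane curve E_r : S^2 = T^3 + T^2 - r^{-1} is a smooth (elliptic) curve over F_q, and the points (T,S) = (t_0, ± t_0) with t_0^3 = r^{-1} (i.e. t_0 = r^{-1/3}, the unique cube root) are flex points; consequently the number of F_q-rational points #E_r(F_q) (including the point at infinity) is divisible by 3. -/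
/-!
In characteristic 3 the discriminant of `y² = x³ + x² - c` is `c`, so the curve is elliptic for
`c ≠ 0`. Since Frobenius is bijective on a finite field, `c` has a cube root `t`, and `(t, t)` is
a flex: the tangent there has slope `1` and meets the curve again only at `(t, t)`. Hence `(t, t)`
is a point of order 3 of the group `E(F_q)`, and Lagrange's theorem gives `3 ∣ #E(F_q)`.
-/

namespace WeierstrassCurve.Affine

variable {R : Type*} [CommRing R] (W : Affine R)

def pointEquivOption : W.Point ≃ Option {xy : R × R // W.Nonsingular xy.1 xy.2} where
  toFun
    | .zero => none
    | .some x y h => some ⟨(x, y), h⟩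
  invFun
    | none => .zero
    | some xy => .some _ _ xy.2
  left_inv := by rintro (_ | _) <;> rfl
  right_inv := by rintro (_ | _) <;> rfl

lemma natCard_point [Finite R] :
    Nat.card W.Point = Nat.card {xy : R × R // W.Nonsingular xy.1 xy.2} + 1 := by
  rw [Nat.card_congr W.pointEquivOption, Finite.card_option]

variable {F : Type*} [Field F] [DecidableEq F] {W : Affine F}

-- `hx` says that the tangent at `(x, y)` meets the curve only there, i.e. the point is a flex.
lemma Point.three_nsmul_some_eq_zero_of_addX_eq {x y : F} (h : W.Nonsingular x y)
    (hy : y ≠ W.negY x y) (hx : W.addX x x (W.slope x x y y) = x) :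
    3 • Point.some x y h = 0 := by
  have hdouble : W.addY x x y (W.slope x x y y) = W.negY x y := by
    rw [addY, negAddY, hx, sub_self, mul_zero, zero_add]
  rw [show (3 : ℕ) = 2 + 1 from rfl, succ_nsmul, two_nsmul, Point.add_of_Y_ne hy]
  exact Point.add_of_Y_eq hx hdouble

end WeierstrassCurve.Affine

open WeierstrassCurve WeierstrassCurve.Affine

section CurveE

variable {F : Type*} [Field F]

-- The curve `E_r` of the paper is `curveE r⁻¹`.
abbrev curveE (c : F) : WeierstrassCurve F := ⟨0, 1, 0, 0, -c⟩

lemma curveE_negY (c x y : F) : (curveE c).toAffine.negY x y = -y := by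
  simp [negY]

variable [CharP F 3]

lemma two_ne_zero_of_charP_three : (2 : F) ≠ 0 :=
  Ring.two_ne_zero (by rw [ringChar.eq F 3]; decide)

lemma curveE_Δ (c : F) : (curveE c).Δ = c := by
  simp only [Δ, b₂, b₄, b₆, b₈]
  linear_combination (21 * c - 144 * c ^ 2) * CharP.ofNat_eq_zero F 3

lemma curveE_nonsingular_iff {c : F} (hc : c ≠ 0) {x y : F} :
    (curveE c).toAffine.Nonsingular x y ↔ y ^ 2 = x ^ 3 + x ^ 2 - c := by
  rw [← equation_iff_nonsingular_of_Δ_ne_zero (by rwa [curveE_Δ]), equation_iff]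
  constructor <;> intro h <;> linear_combination h

lemma curveE_diag_ne_negY {c t : F} (ht : t ≠ 0) : t ≠ (curveE c).toAffine.negY t t := by
  rw [curveE_negY]
  intro h
  exact ht ((mul_eq_zero.mp (by linear_combination h : (2 : F) * t = 0)).resolve_left
    two_ne_zero_of_charP_three)

variable [DecidableEq F]

lemma curveE_slope_diag {c t : F} (ht : t ≠ 0) : (curveE c).toAffine.slope t t t t = 1 := by
  have hne := curveE_diag_ne_negY (c := c) ht
  rw [slope_of_Y_ne rfl hne, div_eq_one_iff_eq (sub_ne_zero.mpr hne), curveE_negY]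
  linear_combination t ^ 2 * CharP.ofNat_eq_zero F 3

lemma curveE_addX_diag {c t : F} (ht : t ≠ 0) :
    (curveE c).toAffine.addX t t ((curveE c).toAffine.slope t t t t) = t := by
  rw [curveE_slope_diag ht, addX]
  linear_combination -t * CharP.ofNat_eq_zero F 3

end CurveE

/-- Let `q` be a power of 3 and `r ∈ F_q^×`.  The curve
`E_r : S² = T³ + T² - r⁻¹` is a smooth elliptic curve over `F_q` (its
Weierstrass discriminant is nonzero), and the number of `F_q`-rational points
`#E_r(F_q)` (affine points plus the point at infinity) is divisible by 3. -/
theorem stmt15 (F : Type*) [Field F] [Fintype F] [CharP F 3] (r : F) (hr : r ≠ 0) :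
    (WeierstrassCurve.Δ ⟨0, 1, 0, 0, -r⁻¹⟩ : F) ≠ 0 ∧
    3 ∣ 1 + Nat.card {p : F × F // p.2 ^ 2 = p.1 ^ 3 + p.1 ^ 2 - r⁻¹} := by
  classical
  have hc : r⁻¹ ≠ 0 := inv_ne_zero hr
  refine ⟨by rwa [curveE_Δ], ?_⟩
  obtain ⟨t, ht⟩ : ∃ t : F, t ^ 3 = r⁻¹ := (frobeniusEquiv F 3).surjective r⁻¹
  have ht0 : t ≠ 0 := ne_zero_pow three_ne_zero (ht ▸ hc)
  have hflex : (curveE r⁻¹).toAffine.Nonsingular t t :=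
    (curveE_nonsingular_iff hc).mpr (by linear_combination -ht)
  have horder : addOrderOf (Point.some t t hflex) = 3 :=
    addOrderOf_eq_prime (Point.three_nsmul_some_eq_zero_of_addX_eq hflex (curveE_diag_ne_negY ht0)
      (curveE_addX_diag ht0)) (by simp)
  have hcard := (curveE r⁻¹).toAffine.natCard_point
  simp only [curveE_nonsingular_iff hc] at hcard
  rw [add_comm, ← hcard, ← horder]
  exact addOrderOf_dvd_natCard _
end

section
/- Let q be a power of 3 and let (p_{01}, p_{02}, p_{03}, p_{12}, p_{13}, p_{23}) ∈ F_q^6 satisfy the Plücker relation p_{01}p_{23} - p_{02}p_{13} + p_{03}p_{12} = 0. For (s,t) ∈ F_q^2, set y_0 = p_{03} s^3, y_1 = p_{13} s^3 + p_{01} t^3, y_2 = p_{23} s^3 + p_{02} t^3, y_3 = p_{03} t^3. Then y_0^2 y_3^2 + y_0 y_2^3 + y_1^3 y_3 = p_{03} · (p_{23} s^4 + p_{13} s^3 t + p_{03} s^2 t^2 + p_{02} s t^3 + p_{01} t^4)^3. -/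
/-- Let `F_q` have characteristic 3 and suppose the Plücker relation
`p₀₁p₂₃ - p₀₂p₁₃ + p₀₃p₁₂ = 0` holds.  For `(s,t) ∈ F_q²`, with
`y₀ = p₀₃s³`, `y₁ = p₁₃s³ + p₀₁t³`, `y₂ = p₂₃s³ + p₀₂t³`, `y₃ = p₀₃t³`, we have
`y₀²y₃² + y₀y₂³ + y₁³y₃ = p₀₃·(p₂₃s⁴ + p₁₃s³t + p₀₃s²t² + p₀₂st³ + p₀₁t⁴)³`. -/
theorem stmt18 (F : Type*) [Field F] [Fintype F] [CharP F 3]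
    (p01 p02 p03 p12 p13 p23 : F)
    (hpl : p01 * p23 - p02 * p13 + p03 * p12 = 0) (s t : F) :
    (p03 * s ^ 3) ^ 2 * (p03 * t ^ 3) ^ 2
      + (p03 * s ^ 3) * (p23 * s ^ 3 + p02 * t ^ 3) ^ 3
      + (p13 * s ^ 3 + p01 * t ^ 3) ^ 3 * (p03 * t ^ 3)
      = p03 * (p23 * s ^ 4 + p13 * s ^ 3 * t + p03 * s ^ 2 * t ^ 2
          + p02 * s * t ^ 3 + p01 * t ^ 4) ^ 3 := by
  haveI : Fact (Nat.Prime 3) := ⟨by norm_num⟩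
  simp only [add_pow_char]
  ring
end

section
/- Let q be a power of 3 and let f = z_0 X^4 + z_1 X^3 Y + X^2 Y^2 + Y^4 be a binary quartic form over F_q with nonzero discriminant, i.e. z_0(z_0-1)^2 - z_1^2 ≠ 0, and set r = (z_0(z_0-1)^2 - z_1^2)^{-1}. Then the smooth projective model E_f of the affine curve W^2 = z_0 + z_1 Y + Y^2 + Y^4 (genus 1 curve, where W = XW'/Y^2 in suitable coordinates) is isomorphic over F_q to the elliptic curve E_r : S^2 = T^3 + T^2 - r^{-1}, via the map (Y, W) ↦ (S, T) = ((Y^2 + W - 1)Y + z_1, (z_0 - 1) - (Y^2 + W - 1)); in particular these two curves have the same number of F_q-rational points. -/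
/-!
In characteristic 3 the substitution `u = Y² + W - 1` turns `W² = z₀ + z₁Y + Y² + Y⁴` into
`u² + u(Y² - 1) = z₁Y + z₀ - 1`, and for `(T, S) = (z₀ - 1 - u, uY + z₁)` one has the identity
`S² - (T³ + T² - Δ) = u · (W² - (z₀ + z₁Y + Y² + Y⁴))`, where `Δ = z₀(z₀ - 1)² - z₁²`.
Hence the map sends the quartic into `E_r`, and off the line `T = z₀ - 1` it is inverted by
`Y = (S - z₁)/u`. On that line `S = ±z₁`: the affine points with `u = 0` (at most one, since
then `z₁Y = 1 - z₀` and `Δ ≠ 0`) go to `(z₀ - 1, z₁)`, while `(z₀ - 1, -z₁)` is the image of a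
point at infinity. So the affine quartic has one point fewer than the affine Weierstrass curve.
-/

namespace BinaryQuartic

variable {F : Type*} [Field F]

def disc (z0 z1 : F) : F := z0 * (z0 - 1) ^ 2 - z1 ^ 2

def quarticLocus (z0 z1 : F) : Set (F × F) :=
  {p | p.2 ^ 2 = z0 + z1 * p.1 + p.1 ^ 2 + p.1 ^ 4}

def weierstrassLocus (c : F) : Set (F × F) :=
  {q | q.2 ^ 2 = q.1 ^ 3 + q.1 ^ 2 - c}

def toWeierstrass (z0 z1 : F) (p : F × F) : F × F :=
  (z0 - 1 - (p.1 ^ 2 + p.2 - 1), (p.1 ^ 2 + p.2 - 1) * p.1 + z1)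

/-- Inverse of `toWeierstrass` off the line `T = z₀ - 1`, where `u = z₀ - 1 - T ≠ 0`. -/
def ofWeierstrass (z0 z1 : F) (q : F × F) : F × F :=
  ((q.2 - z1) / (z0 - 1 - q.1), (z0 - 1 - q.1) + 1 - ((q.2 - z1) / (z0 - 1 - q.1)) ^ 2)

theorem infinity_mem_weierstrassLocus (z0 z1 : F) :
    (z0 - 1, -z1) ∈ weierstrassLocus (disc z0 z1) := by
  simp only [weierstrassLocus, disc, Set.mem_ofPred_eq]
  ring

theorem ne_one_of_disc_ne_zero {z0 z1 : F} (hΔ : disc z0 z1 ≠ 0) (hz1 : z1 = 0) : z0 ≠ 1 := by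
  rintro rfl
  exact hΔ (by simp [disc, hz1])

theorem toWeierstrass_ofWeierstrass {z0 z1 : F} {q : F × F} (hq : q.1 ≠ z0 - 1) :
    toWeierstrass z0 z1 (ofWeierstrass z0 z1 q) = q := by
  have hu : z0 - 1 - q.1 ≠ 0 := sub_ne_zero.2 hq.symm
  simp only [toWeierstrass, ofWeierstrass]
  ext
  · ring
  · field_simp
    ring

section CharThree

variable [CharP F 3]

theorem quartic_sub_eq (z0 z1 Y W : F) :
    W ^ 2 - (z0 + z1 * Y + Y ^ 2 + Y ^ 4)
      = (Y ^ 2 + W - 1) ^ 2 + (Y ^ 2 + W - 1) * (Y ^ 2 - 1) - (z1 * Y + (z0 - 1)) := by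
  linear_combination ((Y ^ 2 + W - 1) * (1 - Y ^ 2) - Y ^ 2) * CharP.cast_eq_zero F 3

theorem weierstrass_sub_toWeierstrass (z0 z1 : F) (p : F × F) :
    (toWeierstrass z0 z1 p).2 ^ 2
        - ((toWeierstrass z0 z1 p).1 ^ 3 + (toWeierstrass z0 z1 p).1 ^ 2 - disc z0 z1)
      = (p.1 ^ 2 + p.2 - 1) * (p.2 ^ 2 - (z0 + z1 * p.1 + p.1 ^ 2 + p.1 ^ 4)) := by
  obtain ⟨Y, W⟩ := p
  rw [quartic_sub_eq]
  simp only [toWeierstrass, disc]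
  linear_combination (Y ^ 2 + W - 1) *
      (Y * z1 + (z0 - 1) + (z0 - 1) ^ 2 - (z0 - 1) * (Y ^ 2 + W - 1)) * CharP.cast_eq_zero F 3

theorem toWeierstrass_mem {z0 z1 : F} {p : F × F} (hp : p ∈ quarticLocus z0 z1) :
    toWeierstrass z0 z1 p ∈ weierstrassLocus (disc z0 z1) := by
  have h := weierstrass_sub_toWeierstrass z0 z1 p
  have hp' : p.2 ^ 2 = z0 + z1 * p.1 + p.1 ^ 2 + p.1 ^ 4 := hp
  rw [hp', sub_self, mul_zero, sub_eq_zero] at h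
  exact h

theorem mem_quarticLocus_iff_of_eq_zero {z0 z1 : F} {p : F × F} (hu : p.1 ^ 2 + p.2 - 1 = 0) :
    p ∈ quarticLocus z0 z1 ↔ z1 * p.1 = 1 - z0 := by
  have h := quartic_sub_eq z0 z1 p.1 p.2
  rw [hu] at h
  change _ = _ ↔ _
  rw [← sub_eq_zero, h]
  constructor <;> intro h' <;> linear_combination -h'

theorem eq_div_of_mem_quarticLocus_of_eq_zero {z0 z1 : F} (hΔ : disc z0 z1 ≠ 0) {p : F × F}
    (hp : p ∈ quarticLocus z0 z1) (hu : p.1 ^ 2 + p.2 - 1 = 0) :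
    z1 ≠ 0 ∧ p.1 = (1 - z0) / z1 := by
  have hY := (mem_quarticLocus_iff_of_eq_zero hu).1 hp
  have hz1 : z1 ≠ 0 := fun hz1 =>
    ne_one_of_disc_ne_zero hΔ hz1 (by linear_combination hY - p.1 * hz1)
  exact ⟨hz1, by field_simp; linear_combination hY⟩

theorem toWeierstrass_injOn {z0 z1 : F} (hΔ : disc z0 z1 ≠ 0) :
    Set.InjOn (toWeierstrass z0 z1) (quarticLocus z0 z1) := by
  rintro ⟨Y, W⟩ hp ⟨Y', W'⟩ hp' he
  simp only [toWeierstrass, Prod.mk.injEq] at he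
  obtain ⟨hT, hS⟩ := he
  have hu : Y ^ 2 + W - 1 = Y' ^ 2 + W' - 1 := by linear_combination -hT
  have hY : Y = Y' := by
    by_cases hu0 : Y ^ 2 + W - 1 = 0
    · have hu0' : Y' ^ 2 + W' - 1 = 0 := hu ▸ hu0
      exact (eq_div_of_mem_quarticLocus_of_eq_zero hΔ hp hu0).2.trans
        (eq_div_of_mem_quarticLocus_of_eq_zero hΔ hp' hu0').2.symm
    · exact mul_left_cancel₀ hu0 (by linear_combination hS - Y' * hu)
  subst hY
  simp only [Prod.mk.injEq, true_and]
  linear_combination hu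

theorem toWeierstrass_ne_infinity {z0 z1 : F} (hΔ : disc z0 z1 ≠ 0) {p : F × F}
    (hp : p ∈ quarticLocus z0 z1) : toWeierstrass z0 z1 p ≠ (z0 - 1, -z1) := by
  intro he
  simp only [toWeierstrass, Prod.mk.injEq] at he
  obtain ⟨hT, hS⟩ := he
  have hu : p.1 ^ 2 + p.2 - 1 = 0 := by linear_combination -hT
  rw [hu, zero_mul, zero_add] at hS
  exact (eq_div_of_mem_quarticLocus_of_eq_zero hΔ hp hu).1
    (by linear_combination -hS + z1 * CharP.cast_eq_zero F 3)

theorem ofWeierstrass_mem {z0 z1 : F} {q : F × F} (hq : q ∈ weierstrassLocus (disc z0 z1))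
    (hT : q.1 ≠ z0 - 1) : ofWeierstrass z0 z1 q ∈ quarticLocus z0 z1 := by
  have hu : (ofWeierstrass z0 z1 q).1 ^ 2 + (ofWeierstrass z0 z1 q).2 - 1 ≠ 0 := by
    simp only [ofWeierstrass]
    intro hu
    exact hT (by linear_combination -hu)
  have hq' : q.2 ^ 2 = q.1 ^ 3 + q.1 ^ 2 - disc z0 z1 := hq
  have h := weierstrass_sub_toWeierstrass z0 z1 (ofWeierstrass z0 z1 q)
  rw [toWeierstrass_ofWeierstrass hT, sub_eq_zero.2 hq'] at h
  exact sub_eq_zero.1 ((mul_eq_zero.1 h.symm).resolve_left hu)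

theorem exists_toWeierstrass_eq {z0 z1 : F} {q : F × F}
    (hq : q ∈ weierstrassLocus (disc z0 z1)) (hne : q ≠ (z0 - 1, -z1)) :
    ∃ p ∈ quarticLocus z0 z1, toWeierstrass z0 z1 p = q := by
  by_cases hT : q.1 = z0 - 1
  · obtain ⟨T, S⟩ := q
    simp only at hT
    subst hT
    have hq' : S ^ 2 = (z0 - 1) ^ 3 + (z0 - 1) ^ 2 - disc z0 z1 := hq
    have hS : S = z1 := by
      have : (S - z1) * (S + z1) = 0 := by simp only [disc] at hq'; linear_combination hq'
      refine sub_eq_zero.1 ((mul_eq_zero.1 this).resolve_right fun h => hne ?_)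
      rw [eq_neg_of_add_eq_zero_left h]
    subst hS
    have hz1 : S ≠ 0 := fun h => hne (by rw [h, neg_zero])
    refine ⟨((1 - z0) / S, 1 - ((1 - z0) / S) ^ 2), ?_, ?_⟩
    · rw [mem_quarticLocus_iff_of_eq_zero (by ring)]
      field_simp
    · simp only [toWeierstrass, Prod.mk.injEq]
      constructor <;> ring
  · exact ⟨_, ofWeierstrass_mem hq hT, toWeierstrass_ofWeierstrass hT⟩

theorem bijOn_toWeierstrass {z0 z1 : F} (hΔ : disc z0 z1 ≠ 0) :
    Set.BijOn (toWeierstrass z0 z1) (quarticLocus z0 z1)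
      (weierstrassLocus (disc z0 z1) \ {(z0 - 1, -z1)}) :=
  ⟨fun _ hp => ⟨toWeierstrass_mem hp, toWeierstrass_ne_infinity hΔ hp⟩,
    toWeierstrass_injOn hΔ, fun _ ⟨hq, hne⟩ => exists_toWeierstrass_eq hq hne⟩

theorem ncard_quarticLocus_add_one [Finite F] {z0 z1 : F} (hΔ : disc z0 z1 ≠ 0) :
    (quarticLocus z0 z1).ncard + 1 = (weierstrassLocus (disc z0 z1)).ncard := by
  rw [(bijOn_toWeierstrass hΔ).ncard_eq]
  exact Set.ncard_sdiff_singleton_add_one (infinity_mem_weierstrassLocus z0 z1)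

end CharThree

end BinaryQuartic

open BinaryQuartic in
/-- Let `q` be a power of 3 and `f = z₀X⁴ + z₁X³Y + X²Y² + Y⁴` a binary quartic
over `F_q` with nonzero discriminant, i.e. `z₀(z₀-1)² - z₁² ≠ 0`, and let
`r = (z₀(z₀-1)² - z₁²)⁻¹`.  The smooth projective model `E_f` of the affine
curve `W² = z₀ + z₁Y + Y² + Y⁴` is isomorphic over `F_q` to the elliptic curve
`E_r : S² = T³ + T² - r⁻¹` via
`(Y,W) ↦ (S,T) = ((Y²+W-1)Y + z₁, (z₀-1) - (Y²+W-1))`: this map sends points of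
`E_f` to points of `E_r`, is injective on affine points, and the two curves
have the same number of `F_q`-rational points (`E_f` has two points at
infinity, `E_r` has one). -/
theorem stmt19 (F : Type*) [Field F] [Fintype F] [CharP F 3] (z0 z1 : F)
    (hΔ : z0 * (z0 - 1) ^ 2 - z1 ^ 2 ≠ 0) (r : F)
    (hr : r = (z0 * (z0 - 1) ^ 2 - z1 ^ 2)⁻¹) :
    (∀ Y W : F, W ^ 2 = z0 + z1 * Y + Y ^ 2 + Y ^ 4 →
      ((Y ^ 2 + W - 1) * Y + z1) ^ 2
        = ((z0 - 1) - (Y ^ 2 + W - 1)) ^ 3 + ((z0 - 1) - (Y ^ 2 + W - 1)) ^ 2 - r⁻¹) ∧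
    (∀ Y W Y' W' : F, W ^ 2 = z0 + z1 * Y + Y ^ 2 + Y ^ 4 →
      W' ^ 2 = z0 + z1 * Y' + Y' ^ 2 + Y' ^ 4 →
      ((Y ^ 2 + W - 1) * Y + z1 = (Y' ^ 2 + W' - 1) * Y' + z1 ∧
        (z0 - 1) - (Y ^ 2 + W - 1) = (z0 - 1) - (Y' ^ 2 + W' - 1)) →
      Y = Y' ∧ W = W') ∧
    2 + Nat.card {p : F × F // p.2 ^ 2 = z0 + z1 * p.1 + p.1 ^ 2 + p.1 ^ 4}
      = 1 + Nat.card {p : F × F // p.2 ^ 2 = p.1 ^ 3 + p.1 ^ 2 - r⁻¹} := by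
  subst hr
  rw [inv_inv]
  refine ⟨fun Y W h => toWeierstrass_mem (p := (Y, W)) h,
    fun Y W Y' W' h h' ⟨hS, hT⟩ => Prod.ext_iff.1 (toWeierstrass_injOn hΔ h h'
      (Prod.ext hT hS : toWeierstrass z0 z1 (Y, W) = toWeierstrass z0 z1 (Y', W'))),
    ?_⟩
  have hcard := ncard_quarticLocus_add_one hΔ
  change 2 + Nat.card (quarticLocus z0 z1) = 1 + Nat.card (weierstrassLocus (disc z0 z1))
  rw [Nat.card_coe_set_eq, Nat.card_coe_set_eq]
  omega
end
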